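/- For 0 < ρ < 1 and ε > 0 one has |ℜ(ρ,ε)| ≤ ρ + 4ε + 2√ε; moreover, if in addition ρ + 4√ε < 1, then 4ε < 2√ε and hence |ℜ(ρ,ε)| ≤ ρ + 4ε + 2√ε < ρ + 4√ε < 1. -/

import Mathlib

noncomputable section

/-- The Euclidean norm `|x| = (x₁² + x₂²)^{1/2}` on `ℝ²`. -/
def eucNorm (x : Fin 2 → ℝ) : ℝ :=
  Real.sqrt (x 0 ^ 2 + x 1 ^ 2)

/-- The operator norm `|M| := sup_{x ≠ 0} |Mx|/|x|` of a 2×2 real matrix. -/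
def eucOpNorm (M : Matrix (Fin 2) (Fin 2) ℝ) : ℝ :=
  ⨆ x : {x : Fin 2 → ℝ // x ≠ 0}, eucNorm (M.mulVec (x : Fin 2 → ℝ)) / eucNorm (x : Fin 2 → ℝ)

/-- The matrix `ℜ(ρ,ε)` with rows `(ρ+2ε, 2√(ε(1+ε)))` and `(2√(ε(1+ε)), 2ε)`. -/
def Rmat (ρ ε : ℝ) : Matrix (Fin 2) (Fin 2) ℝ :=
  !![ρ + 2 * ε, 2 * Real.sqrt (ε * (1 + ε));
     2 * Real.sqrt (ε * (1 + ε)), 2 * ε]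

/-!
The off-diagonal entry `2√(ε(1+ε))` is at most `2√ε + 2ε`, so both row sums of the nonnegative
symmetric matrix `ℜ(ρ,ε)` are at most `ρ + 4ε + 2√ε`, and for such matrices the largest row sum
bounds the Euclidean operator norm (Schur's test). With `s = √ε`, the condition `ρ + 4s < 1`
forces `s < 1/4`, hence `4ε = 4s² < s < 2s`.
-/

open Matrix

lemma eucNorm_pos {x : Fin 2 → ℝ} (hx : x ≠ 0) : 0 < eucNorm x := by
  rcases Function.ne_iff.1 hx with ⟨i, hi⟩
  refine Real.sqrt_pos.2 ?_
  fin_cases i <;> simp only [Fin.zero_eta, Fin.mk_one, Pi.zero_apply, ne_eq] at hi <;> positivity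

lemma eucOpNorm_le {M : Matrix (Fin 2) (Fin 2) ℝ} {B : ℝ}
    (h : ∀ x, eucNorm (M *ᵥ x) ≤ B * eucNorm x) : eucOpNorm M ≤ B := by
  have : Nonempty {x : Fin 2 → ℝ // x ≠ 0} := ⟨⟨![1, 0], by simp⟩⟩
  exact ciSup_le fun ⟨x, hx⟩ => (div_le_iff₀ (eucNorm_pos hx)).2 (h x)

lemma sq_add_sq_symm_mulVec_le {a b c B : ℝ} (ha : 0 ≤ a) (hb : 0 ≤ b) (hc : 0 ≤ c)
    (h1 : a + b ≤ B) (h2 : b + c ≤ B) (x y : ℝ) :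
    (a * x + b * y) ^ 2 + (b * x + c * y) ^ 2 ≤ B ^ 2 * (x ^ 2 + y ^ 2) := by
  have hB : 0 ≤ B := (add_nonneg ha hb).trans h1
  -- Cauchy–Schwarz row by row; the defects are `a b (x - y)²` and `b c (x - y)²`.
  have row₁ : (a * x + b * y) ^ 2 ≤ (a + b) * (a * x ^ 2 + b * y ^ 2) := by
    nlinarith [mul_nonneg (mul_nonneg ha hb) (sq_nonneg (x - y))]
  have row₂ : (b * x + c * y) ^ 2 ≤ (b + c) * (b * x ^ 2 + c * y ^ 2) := by
    nlinarith [mul_nonneg (mul_nonneg hb hc) (sq_nonneg (x - y))]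
  calc (a * x + b * y) ^ 2 + (b * x + c * y) ^ 2
      ≤ (a + b) * (a * x ^ 2 + b * y ^ 2) + (b + c) * (b * x ^ 2 + c * y ^ 2) :=
        add_le_add row₁ row₂
    _ ≤ B * (a * x ^ 2 + b * y ^ 2) + B * (b * x ^ 2 + c * y ^ 2) := by gcongr
    _ = B * ((a + b) * x ^ 2 + (b + c) * y ^ 2) := by ring
    _ ≤ B * (B * x ^ 2 + B * y ^ 2) := by gcongr
    _ = B ^ 2 * (x ^ 2 + y ^ 2) := by ring

lemma eucOpNorm_symm_le_of_rowSum_le {a b c B : ℝ} (ha : 0 ≤ a) (hb : 0 ≤ b) (hc : 0 ≤ c)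
    (h1 : a + b ≤ B) (h2 : b + c ≤ B) : eucOpNorm !![a, b; b, c] ≤ B := by
  have hB : 0 ≤ B := (add_nonneg ha hb).trans h1
  refine eucOpNorm_le fun x => ?_
  rw [eucNorm, eucNorm, ← Real.sqrt_sq hB, ← Real.sqrt_mul (sq_nonneg B)]
  refine Real.sqrt_le_sqrt ?_
  simpa [mulVec, dotProduct, Fin.sum_univ_two]
    using sq_add_sq_symm_mulVec_le ha hb hc h1 h2 (x 0) (x 1)

lemma sqrt_mul_one_add_le {ε : ℝ} (hε : 0 ≤ ε) : √(ε * (1 + ε)) ≤ √ε + ε := by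
  have hs := Real.sq_sqrt hε
  refine Real.sqrt_le_iff.2 ⟨by positivity, ?_⟩
  nlinarith [Real.sqrt_nonneg ε]

theorem Rmat_opNorm_bound_general
    (ρ ε : ℝ) (hρ : 0 < ρ) (hε : 0 < ε) :
    eucOpNorm (Rmat ρ ε) ≤ ρ + 4 * ε + 2 * Real.sqrt ε ∧
    (ρ + 4 * Real.sqrt ε < 1 →
      4 * ε < 2 * Real.sqrt ε ∧
      ρ + 4 * ε + 2 * Real.sqrt ε < ρ + 4 * Real.sqrt ε ∧
      eucOpNorm (Rmat ρ ε) < 1) := by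
  have hs : 0 < √ε := Real.sqrt_pos.2 hε
  have hs2 : √ε ^ 2 = ε := Real.sq_sqrt hε.le
  have hoff := sqrt_mul_one_add_le hε.le
  have key : eucOpNorm (Rmat ρ ε) ≤ ρ + 4 * ε + 2 * √ε :=
    eucOpNorm_symm_le_of_rowSum_le (by positivity) (by positivity) (by positivity)
      (by linarith) (by linarith)
  refine ⟨key, fun h => ?_⟩
  have h4ε : 4 * ε < 2 * √ε := by nlinarith
  exact ⟨h4ε, by linarith, key.trans_lt (by linarith)⟩

/-- for `0 < ρ < 1` and `ε > 0`, `|ℜ(ρ,ε)| ≤ ρ + 4ε + 2√ε`;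
moreover, if `ρ + 4√ε < 1` then `4ε < 2√ε` and
`|ℜ(ρ,ε)| ≤ ρ + 4ε + 2√ε < ρ + 4√ε < 1`. -/
theorem Rmat_opNorm_bound
    (ρ ε : ℝ) (hρ : 0 < ρ) (hρ1 : ρ < 1) (hε : 0 < ε) :
    eucOpNorm (Rmat ρ ε) ≤ ρ + 4 * ε + 2 * Real.sqrt ε ∧
    (ρ + 4 * Real.sqrt ε < 1 →
      4 * ε < 2 * Real.sqrt ε ∧
      ρ + 4 * ε + 2 * Real.sqrt ε < ρ + 4 * Real.sqrt ε ∧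
      eucOpNorm (Rmat ρ ε) < 1) :=
  Rmat_opNorm_bound_general ρ ε hρ hε
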